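/- Diagonalization of the mixing block of the leading symbol on symmetric two-tensors: let μ₃, q, κ be real numbers with ω := √(κ² + ((μ₃ − q)/2)²) > 0, and set ν₊ := (μ₃ + q)/2 + ω, ν₋ := (μ₃ + q)/2 − ω, Z₊ := (1/2)(1 + (μ₃ − q)/(2ω))Π₃ + (κ/(2ω))(T + T†) + (1/2)(1 − (μ₃ − q)/(2ω))(id − P), Z₋ := (1/2)(1 − (μ₃ − q)/(2ω))Π₃ − (κ/(2ω))(T + T†) + (1/2)(1 + (μ₃ − q)/(2ω))(id − P). Then Z₊ and Z₋ are complementary idempotents with Z₊Z₋ = Z₋Z₊ = 0, Z₊ + Z₋ = Π₃ + (id − P), and μ₃Π₃ + κ(T + T†) + q(id − P) = ν₊Z₊ + ν₋Z₋. -/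

import Mathlib

open Matrix

namespace NLT

/-- `|ξ|²`, the squared Euclidean norm of `ξ ∈ ℝ^m`. -/
noncomputable def nsq {m : ℕ} (ξ : Fin m → ℝ) : ℝ := ∑ i, ξ i ^ 2

/-- `(X₁φ)_{αβ} = δ_{αβ} tr φ`. -/
noncomputable def X1 {m : ℕ} (φ : Matrix (Fin m) (Fin m) ℝ) : Matrix (Fin m) (Fin m) ℝ :=
  Matrix.of fun α β => (if α = β then (1 : ℝ) else 0) * φ.trace

/-- `(X₂φ)_{αβ} = (1/(2|ξ|²)) (ξ_α (φξ)_β + ξ_β (φξ)_α)`. -/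
noncomputable def X2 {m : ℕ} (ξ : Fin m → ℝ) (φ : Matrix (Fin m) (Fin m) ℝ) :
    Matrix (Fin m) (Fin m) ℝ :=
  Matrix.of fun α β => (1 / (2 * nsq ξ)) * (ξ α * φ.mulVec ξ β + ξ β * φ.mulVec ξ α)

/-- `(X₃φ)_{αβ} = (1/|ξ|²) ξ_α ξ_β tr φ`. -/
noncomputable def X3 {m : ℕ} (ξ : Fin m → ℝ) (φ : Matrix (Fin m) (Fin m) ℝ) :
    Matrix (Fin m) (Fin m) ℝ :=
  Matrix.of fun α β => (1 / nsq ξ) * (ξ α * ξ β * φ.trace)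

/-- `(X₄φ)_{αβ} = (1/|ξ|²) δ_{αβ} ⟨ξ, φξ⟩`. -/
noncomputable def X4 {m : ℕ} (ξ : Fin m → ℝ) (φ : Matrix (Fin m) (Fin m) ℝ) :
    Matrix (Fin m) (Fin m) ℝ :=
  Matrix.of fun α β => (1 / nsq ξ) * (if α = β then (1 : ℝ) else 0) * (ξ ⬝ᵥ φ.mulVec ξ)

/-- `(X₅φ)_{αβ} = (1/|ξ|⁴) ξ_α ξ_β ⟨ξ, φξ⟩`. -/
noncomputable def X5 {m : ℕ} (ξ : Fin m → ℝ) (φ : Matrix (Fin m) (Fin m) ℝ) :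
    Matrix (Fin m) (Fin m) ℝ :=
  Matrix.of fun α β => (1 / (nsq ξ) ^ 2) * (ξ α * ξ β * (ξ ⬝ᵥ φ.mulVec ξ))

/-- `P = id − (1/m) X₁`, the projection onto trace-free part. -/
noncomputable def P {m : ℕ} (φ : Matrix (Fin m) (Fin m) ℝ) : Matrix (Fin m) (Fin m) ℝ :=
  φ - ((1 : ℝ) / m) • X1 φ

/-- `T = (1/√(m−1)) (X₃ − (1/m) X₁)`. -/
noncomputable def T {m : ℕ} (ξ : Fin m → ℝ) (φ : Matrix (Fin m) (Fin m) ℝ) :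
    Matrix (Fin m) (Fin m) ℝ :=
  (1 / Real.sqrt ((m : ℝ) - 1)) • (X3 ξ φ - ((1 : ℝ) / m) • X1 φ)

/-- `T† = (1/√(m−1)) (X₄ − (1/m) X₁)`. -/
noncomputable def Td {m : ℕ} (ξ : Fin m → ℝ) (φ : Matrix (Fin m) (Fin m) ℝ) :
    Matrix (Fin m) (Fin m) ℝ :=
  (1 / Real.sqrt ((m : ℝ) - 1)) • (X4 ξ φ - ((1 : ℝ) / m) • X1 φ)

/-- `Π₃ = (m/(m−1)) P X₅ P`. -/
noncomputable def Pi3A {m : ℕ} (ξ : Fin m → ℝ) (φ : Matrix (Fin m) (Fin m) ℝ) :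
    Matrix (Fin m) (Fin m) ℝ :=
  ((m : ℝ) / ((m : ℝ) - 1)) • P (X5 ξ (P φ))

/-- `Z₊ = (1/2)(1 + (μ₃−q)/(2ω)) Π₃ + (κ/(2ω))(T + T†) + (1/2)(1 − (μ₃−q)/(2ω))(id − P)`. -/
noncomputable def ZpS {m : ℕ} (ξ : Fin m → ℝ) (μ₃ q κ ω : ℝ)
    (φ : Matrix (Fin m) (Fin m) ℝ) : Matrix (Fin m) (Fin m) ℝ :=
  ((1 + (μ₃ - q) / (2 * ω)) / 2) • Pi3A ξ φ + (κ / (2 * ω)) • (T ξ φ + Td ξ φ)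
    + ((1 - (μ₃ - q) / (2 * ω)) / 2) • (φ - P φ)

/-- `Z₋ = (1/2)(1 − (μ₃−q)/(2ω)) Π₃ − (κ/(2ω))(T + T†) + (1/2)(1 + (μ₃−q)/(2ω))(id − P)`. -/
noncomputable def ZmS {m : ℕ} (ξ : Fin m → ℝ) (μ₃ q κ ω : ℝ)
    (φ : Matrix (Fin m) (Fin m) ℝ) : Matrix (Fin m) (Fin m) ℝ :=
  ((1 - (μ₃ - q) / (2 * ω)) / 2) • Pi3A ξ φ - (κ / (2 * ω)) • (T ξ φ + Td ξ φ)
    + ((1 + (μ₃ - q) / (2 * ω)) / 2) • (φ - P φ)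

/-!
Put `Ξ = ξξᵀ/|ξ|²`. Every operator of the statement takes values in `span {1, Ξ}` and sees `φ`
only through `tr φ` and `⟨ξ, φξ⟩`. In the basis `v = (mΞ − 1)/√(m−1)`, `u = 1` of that plane,
whose dual functionals are `(⟨ξ, φξ⟩/|ξ|² − tr φ/m)/√(m−1)` and `tr φ/m`, the operators
`Π₃, T, T†, id − P` are exactly the matrix units `e₀₀, e₀₁, e₁₀, e₁₁`. So `M ↦ ∑ Mᵢⱼ eᵢⱼ` turns
products of `2 × 2` matrices into composition, and the theorem becomes the spectral decomposition
of the symmetric matrix `!![μ₃, κ; κ, q]` into its two rank-one eigenprojections.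
-/

noncomputable def specProj (r c : ℝ) : Matrix (Fin 2) (Fin 2) ℝ :=
  !![(1 + r) / 2, c; c, (1 - r) / 2]

section SpecProj

variable {r c : ℝ}

theorem specProj_mul_self (h : r ^ 2 + 4 * c ^ 2 = 1) :
    specProj r c * specProj r c = specProj r c := by
  ext i j
  fin_cases i <;> fin_cases j <;>
    simp only [specProj, mul_apply, Fin.sum_univ_two, of_apply, cons_val',
      cons_val_zero, cons_val_one, cons_val_fin_one, Fin.zero_eta, Fin.mk_one,
      Fin.isValue] <;>
    linarith

theorem specProj_mul_specProj_neg (h : r ^ 2 + 4 * c ^ 2 = 1) :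
    specProj r c * specProj (-r) (-c) = 0 := by
  ext i j
  fin_cases i <;> fin_cases j <;>
    simp only [specProj, mul_apply, Fin.sum_univ_two, of_apply, cons_val',
      cons_val_zero, cons_val_one, cons_val_fin_one, Fin.zero_eta, Fin.mk_one,
      Fin.isValue, Matrix.zero_apply] <;>
    linarith

theorem specProj_add_specProj_neg (r c : ℝ) : specProj r c + specProj (-r) (-c) = 1 := by
  rw [one_fin_two]
  ext i j
  fin_cases i <;> fin_cases j <;>
    simp only [specProj, Matrix.add_apply, of_apply, cons_val', cons_val_zero,
      cons_val_one, cons_val_fin_one, Fin.zero_eta, Fin.mk_one, Fin.isValue] <;>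
    ring

theorem eq_smul_specProj_add_smul_specProj_neg (a d k : ℝ) {ω : ℝ} (hω : ω ≠ 0) :
    !![a, k; k, d] = ((a + d) / 2 + ω) • specProj ((a - d) / (2 * ω)) (k / (2 * ω))
      + ((a + d) / 2 - ω) • specProj (-((a - d) / (2 * ω))) (-(k / (2 * ω))) := by
  ext i j
  fin_cases i <;> fin_cases j <;>
    simp only [specProj, Matrix.add_apply, Matrix.smul_apply, smul_eq_mul, of_apply,
      cons_val', cons_val_zero, cons_val_one, cons_val_fin_one,
      Fin.zero_eta, Fin.mk_one, Fin.isValue] <;>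
    field_simp <;> ring

end SpecProj

section ClosedForms

variable {m : ℕ} (ξ : Fin m → ℝ) (φ : Matrix (Fin m) (Fin m) ℝ)

theorem nsq_eq_dotProduct : nsq ξ = ξ ⬝ᵥ ξ := by
  simp only [nsq, dotProduct, sq]

theorem nsq_ne_zero {ξ : Fin m → ℝ} (hξ : ξ ≠ 0) : nsq ξ ≠ 0 := by
  rwa [nsq_eq_dotProduct, Ne, dotProduct_self_eq_zero]

theorem X1_eq_smul_one : X1 φ = φ.trace • 1 := by
  ext α β
  simp [X1, Matrix.one_apply]

theorem X3_eq_smul_vecMulVec : X3 ξ φ = (φ.trace / nsq ξ) • vecMulVec ξ ξ := by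
  ext α β
  simp only [X3, of_apply, Matrix.smul_apply, vecMulVec_apply, smul_eq_mul]
  ring

theorem X4_eq_smul_one : X4 ξ φ = (ξ ⬝ᵥ φ *ᵥ ξ / nsq ξ) • 1 := by
  ext α β
  simp [X4, Matrix.one_apply, inv_mul_eq_div]

theorem X5_eq_smul_vecMulVec : X5 ξ φ = (ξ ⬝ᵥ φ *ᵥ ξ / nsq ξ ^ 2) • vecMulVec ξ ξ := by
  ext α β
  simp only [X5, of_apply, Matrix.smul_apply, vecMulVec_apply, smul_eq_mul]
  ring

theorem P_eq_sub_smul_one : P φ = φ - (φ.trace / m) • 1 := by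
  rw [P, X1_eq_smul_one, smul_smul, one_div_mul_eq_div]

end ClosedForms

section Block

variable {m : ℕ} (ξ : Fin m → ℝ) (φ : Matrix (Fin m) (Fin m) ℝ)

noncomputable def tracelessDir : Matrix (Fin m) (Fin m) ℝ :=
  (√((m : ℝ) - 1))⁻¹ • ((m / nsq ξ) • vecMulVec ξ ξ - 1)

noncomputable def blockCoord : Fin 2 → ℝ :=
  ![(ξ ⬝ᵥ φ *ᵥ ξ / nsq ξ - φ.trace / m) / √((m : ℝ) - 1), φ.trace / m]

noncomputable def blockEmbed (c : Fin 2 → ℝ) : Matrix (Fin m) (Fin m) ℝ :=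
  c 0 • tracelessDir ξ + c 1 • 1

theorem trace_tracelessDir (hξ : ξ ≠ 0) : (tracelessDir ξ).trace = 0 := by
  simp [tracelessDir, ← nsq_eq_dotProduct, nsq_ne_zero hξ]

theorem dotProduct_tracelessDir_mulVec (hξ : ξ ≠ 0) :
    ξ ⬝ᵥ tracelessDir ξ *ᵥ ξ = √((m : ℝ) - 1) * nsq ξ := by
  have hn := nsq_ne_zero hξ
  simp only [tracelessDir, smul_mulVec, sub_mulVec, vecMulVec_mulVec, op_smul_eq_smul, one_mulVec,
    dotProduct_smul, dotProduct_sub, smul_eq_mul, ← nsq_eq_dotProduct]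
  have hcoef : m / nsq ξ * (nsq ξ * nsq ξ) - nsq ξ = (m - 1) * nsq ξ := by
    field_simp
  rw [hcoef, ← mul_assoc, inv_mul_eq_div, Real.div_sqrt]

theorem blockCoord_blockEmbed (hm : 2 ≤ m) (hξ : ξ ≠ 0) (c : Fin 2 → ℝ) :
    blockCoord ξ (blockEmbed ξ c) = c := by
  have hm1 : (1 : ℝ) < m := by exact_mod_cast hm
  have hm0 : (m : ℝ) ≠ 0 := by positivity
  have hs0 : √((m : ℝ) - 1) ≠ 0 := by positivity
  have htrace : (blockEmbed ξ c).trace = c 1 * m := by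
    simp [blockEmbed, trace_tracelessDir ξ hξ]
  have hquad : ξ ⬝ᵥ blockEmbed ξ c *ᵥ ξ = (c 0 * √((m : ℝ) - 1) + c 1) * nsq ξ := by
    simp only [blockEmbed, add_mulVec, smul_mulVec, one_mulVec, dotProduct_add, dotProduct_smul,
      dotProduct_tracelessDir_mulVec ξ hξ, ← nsq_eq_dotProduct, smul_eq_mul]
    ring
  ext i
  fin_cases i <;> simp [blockCoord, htrace, hquad, nsq_ne_zero hξ, hm0, hs0]

theorem T_eq_smul_tracelessDir (hm : m ≠ 0) : T ξ φ = blockCoord ξ φ 1 • tracelessDir ξ := by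
  simp only [T, X3_eq_smul_vecMulVec, X1_eq_smul_one, blockCoord, tracelessDir]
  match_scalars <;>
    simp only [one_div, mul_one, mul_neg, Fin.isValue, cons_val_one, cons_val_fin_one, neg_inj] <;>
    field_simp

theorem Td_eq_smul_one : Td ξ φ = blockCoord ξ φ 0 • 1 := by
  simp only [Td, X4_eq_smul_one, X1_eq_smul_one, blockCoord]
  match_scalars
  simp only [one_div, mul_one, Fin.isValue, cons_val_zero]
  field_simp

theorem sub_P_eq_smul_one : φ - P φ = blockCoord ξ φ 1 • 1 := by
  rw [P_eq_sub_smul_one, sub_sub_cancel]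
  rfl

theorem Pi3A_eq_smul_tracelessDir (hm : 2 ≤ m) (hξ : ξ ≠ 0) :
    Pi3A ξ φ = blockCoord ξ φ 0 • tracelessDir ξ := by
  have hm1 : (1 : ℝ) < m := by exact_mod_cast hm
  have hm1' : (m : ℝ) - 1 ≠ 0 := sub_ne_zero.2 hm1.ne'
  have hs : √((m : ℝ) - 1) ^ 2 = m - 1 := Real.sq_sqrt (by linarith)
  have hs0 : √((m : ℝ) - 1) ≠ 0 := by positivity
  have hn := nsq_ne_zero hξ
  simp only [Pi3A, P_eq_sub_smul_one, X5_eq_smul_vecMulVec, blockCoord, tracelessDir]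
  match_scalars <;>
    simp only [sub_mulVec, smul_mulVec, one_mulVec, dotProduct_sub, dotProduct_smul, smul_eq_mul,
      ← nsq_eq_dotProduct, trace_smul, trace_vecMulVec, mul_one, mul_neg, Fin.isValue,
      cons_val_zero, neg_inj] <;>
    field_simp <;>
    rw [hs] <;>
    ring

noncomputable def blockOp (M : Matrix (Fin 2) (Fin 2) ℝ) (φ : Matrix (Fin m) (Fin m) ℝ) :
    Matrix (Fin m) (Fin m) ℝ :=
  blockEmbed ξ (M *ᵥ blockCoord ξ φ)

theorem blockOp_blockOp (hm : 2 ≤ m) (hξ : ξ ≠ 0) (M N : Matrix (Fin 2) (Fin 2) ℝ) :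
    blockOp ξ M (blockOp ξ N φ) = blockOp ξ (M * N) φ := by
  rw [blockOp, blockOp, blockCoord_blockEmbed ξ hm hξ, mulVec_mulVec, blockOp]

theorem blockOp_add (M N : Matrix (Fin 2) (Fin 2) ℝ) :
    blockOp ξ M φ + blockOp ξ N φ = blockOp ξ (M + N) φ := by
  simp only [blockOp, blockEmbed, add_mulVec, Pi.add_apply, add_smul]
  abel

theorem smul_blockOp (a : ℝ) (M : Matrix (Fin 2) (Fin 2) ℝ) :
    a • blockOp ξ M φ = blockOp ξ (a • M) φ := by
  simp only [blockOp, blockEmbed, smul_mulVec, Pi.smul_apply, smul_eq_mul, smul_add, mul_smul]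

theorem blockOp_zero : blockOp ξ 0 φ = 0 := by
  simp only [blockOp, blockEmbed, zero_mulVec, Pi.zero_apply, zero_smul, add_zero]

theorem blockOp_eq (hm : 2 ≤ m) (hξ : ξ ≠ 0) (M : Matrix (Fin 2) (Fin 2) ℝ) :
    blockOp ξ M φ = M 0 0 • Pi3A ξ φ + M 0 1 • T ξ φ + M 1 0 • Td ξ φ + M 1 1 • (φ - P φ) := by
  rw [Pi3A_eq_smul_tracelessDir ξ φ hm hξ, T_eq_smul_tracelessDir ξ φ (by omega), Td_eq_smul_one,
    sub_P_eq_smul_one, blockOp, blockEmbed]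
  simp only [mulVec, dotProduct, Fin.sum_univ_two]
  module

end Block

section Mixing

variable {m : ℕ} {ξ : Fin m → ℝ}

theorem ZpS_eq_blockOp (hm : 2 ≤ m) (hξ : ξ ≠ 0) (μ₃ q κ ω : ℝ) :
    ZpS ξ μ₃ q κ ω = blockOp ξ (specProj ((μ₃ - q) / (2 * ω)) (κ / (2 * ω))) := by
  funext φ
  rw [blockOp_eq ξ φ hm hξ, ZpS]
  simp only [specProj, of_apply, cons_val', cons_val_zero, cons_val_one, cons_val_fin_one,
    Fin.isValue]
  module

theorem ZmS_eq_blockOp (hm : 2 ≤ m) (hξ : ξ ≠ 0) (μ₃ q κ ω : ℝ) :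
    ZmS ξ μ₃ q κ ω = blockOp ξ (specProj (-((μ₃ - q) / (2 * ω))) (-(κ / (2 * ω)))) := by
  funext φ
  rw [blockOp_eq ξ φ hm hξ, ZmS]
  simp only [specProj, of_apply, cons_val', cons_val_zero, cons_val_one, cons_val_fin_one,
    Fin.isValue]
  module

theorem blockOp_one (hm : 2 ≤ m) (hξ : ξ ≠ 0) (φ : Matrix (Fin m) (Fin m) ℝ) :
    blockOp ξ 1 φ = Pi3A ξ φ + (φ - P φ) := by
  rw [blockOp_eq ξ φ hm hξ]
  simp

theorem blockOp_symm_fin_two (hm : 2 ≤ m) (hξ : ξ ≠ 0) (a d k : ℝ)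
    (φ : Matrix (Fin m) (Fin m) ℝ) :
    blockOp ξ !![a, k; k, d] φ = a • Pi3A ξ φ + k • (T ξ φ + Td ξ φ) + d • (φ - P φ) := by
  rw [blockOp_eq ξ φ hm hξ]
  simp only [of_apply, cons_val', cons_val_zero, cons_val_one, cons_val_fin_one, Fin.isValue]
  module

end Mixing

theorem Z_diagonalization_general (m : ℕ) (hm : 2 ≤ m) (ξ : Fin m → ℝ) (hξ : ξ ≠ 0)
    (μ₃ q κ : ℝ)
    (hω : 0 < Real.sqrt (κ ^ 2 + ((μ₃ - q) / 2) ^ 2))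
    (φ : Matrix (Fin m) (Fin m) ℝ) :
    let ω : ℝ := Real.sqrt (κ ^ 2 + ((μ₃ - q) / 2) ^ 2)
    let νp : ℝ := (μ₃ + q) / 2 + ω
    let νm : ℝ := (μ₃ + q) / 2 - ω
    ZpS ξ μ₃ q κ ω (ZpS ξ μ₃ q κ ω φ) = ZpS ξ μ₃ q κ ω φ ∧
    ZmS ξ μ₃ q κ ω (ZmS ξ μ₃ q κ ω φ) = ZmS ξ μ₃ q κ ω φ ∧
    ZpS ξ μ₃ q κ ω (ZmS ξ μ₃ q κ ω φ) = 0 ∧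
    ZmS ξ μ₃ q κ ω (ZpS ξ μ₃ q κ ω φ) = 0 ∧
    ZpS ξ μ₃ q κ ω φ + ZmS ξ μ₃ q κ ω φ = Pi3A ξ φ + (φ - P φ) ∧
    μ₃ • Pi3A ξ φ + κ • (T ξ φ + Td ξ φ) + q • (φ - P φ)
      = νp • ZpS ξ μ₃ q κ ω φ + νm • ZmS ξ μ₃ q κ ω φ := by
  intro ω νp νm
  have hω0 : ω ≠ 0 := hω.ne'
  have hrc : ((μ₃ - q) / (2 * ω)) ^ 2 + 4 * (κ / (2 * ω)) ^ 2 = 1 := by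
    have hω2 : ω ^ 2 = κ ^ 2 + ((μ₃ - q) / 2) ^ 2 := Real.sq_sqrt (by positivity)
    field_simp
    linear_combination (-4) * hω2
  rw [ZpS_eq_blockOp hm hξ, ZmS_eq_blockOp hm hξ, ← blockOp_one hm hξ,
    ← blockOp_symm_fin_two hm hξ]
  set r := (μ₃ - q) / (2 * ω)
  set c := κ / (2 * ω)
  have hrc' : (-r) ^ 2 + 4 * (-c) ^ 2 = 1 := by linear_combination hrc
  have hneg : specProj (-r) (-c) * specProj r c = 0 := by
    simpa only [neg_neg] using specProj_mul_specProj_neg hrc'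
  simp only [blockOp_blockOp ξ φ hm hξ]
  refine ⟨?_, ?_, ?_, ?_, ?_, ?_⟩
  · rw [specProj_mul_self hrc]
  · rw [specProj_mul_self hrc']
  · rw [specProj_mul_specProj_neg hrc, blockOp_zero]
  · rw [hneg, blockOp_zero]
  · rw [blockOp_add, specProj_add_specProj_neg]
  · rw [smul_blockOp, smul_blockOp, blockOp_add, eq_smul_specProj_add_smul_specProj_neg μ₃ q κ hω0]

/-- Diagonalization of the mixing block of the leading symbol on symmetric two-tensors:
with `ω = √(κ² + ((μ₃−q)/2)²) > 0` and `ν± = (μ₃+q)/2 ± ω`, the operators `Z₊`, `Z₋` are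
complementary idempotents and `μ₃Π₃ + κ(T+T†) + q(id−P) = ν₊Z₊ + ν₋Z₋`. -/
theorem Z_diagonalization (m : ℕ) (hm : 2 ≤ m) (ξ : Fin m → ℝ) (hξ : ξ ≠ 0)
    (μ₃ q κ : ℝ)
    (hω : 0 < Real.sqrt (κ ^ 2 + ((μ₃ - q) / 2) ^ 2))
    (φ : Matrix (Fin m) (Fin m) ℝ) (hφ : φ.IsSymm) :
    let ω : ℝ := Real.sqrt (κ ^ 2 + ((μ₃ - q) / 2) ^ 2)
    let νp : ℝ := (μ₃ + q) / 2 + ω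
    let νm : ℝ := (μ₃ + q) / 2 - ω
    ZpS ξ μ₃ q κ ω (ZpS ξ μ₃ q κ ω φ) = ZpS ξ μ₃ q κ ω φ ∧
    ZmS ξ μ₃ q κ ω (ZmS ξ μ₃ q κ ω φ) = ZmS ξ μ₃ q κ ω φ ∧
    ZpS ξ μ₃ q κ ω (ZmS ξ μ₃ q κ ω φ) = 0 ∧
    ZmS ξ μ₃ q κ ω (ZpS ξ μ₃ q κ ω φ) = 0 ∧
    ZpS ξ μ₃ q κ ω φ + ZmS ξ μ₃ q κ ω φ = Pi3A ξ φ + (φ - P φ) ∧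
    μ₃ • Pi3A ξ φ + κ • (T ξ φ + Td ξ φ) + q • (φ - P φ)
      = νp • ZpS ξ μ₃ q κ ω φ + νm • ZmS ξ μ₃ q κ ω φ :=
  Z_diagonalization_general m hm ξ hξ μ₃ q κ hω φ

end NLT
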